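/- arXiv:1611.02126 — 8 statements merged into one kernel-verified Lean document; each statement's English description precedes it below -/
import Mathlib

section
/- Let M be a graphoid over a finite set U, and let A, B, and C be three pairwise disjoint subsets of U. If A and B are mutually irrelevant, and A and C are mutually irrelevant, then A and B ∪ C are mutually irrelevant. -/
/-- A graphoid over the finite set of elements of the type `V`:
a set of triplets `(X, Y | Z)` of pairwise disjoint finite subsets of `V`
satisfying trivial independence, symmetry, decomposition, weak union and
contraction. -/
structure Graphoid (V : Type*) [DecidableEq V] where
  rel : Finset V → Finset V → Finset V → Prop
  disjoint_of_rel : ∀ X Y Z, rel X Y Z → Disjoint X Y ∧ Disjoint X Z ∧ Disjoint Y Z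
  trivial_indep : ∀ X Z, Disjoint X Z → rel X ∅ Z
  symm : ∀ X Y Z, rel X Y Z → rel Y X Z
  decomposition : ∀ X Y W Z, rel X (Y ∪ W) Z → rel X Y Z
  weakUnion : ∀ X Y W Z, rel X (Y ∪ W) Z → rel X Y (Z ∪ W)
  contraction : ∀ X Y W Z, rel X Y Z → rel X W (Z ∪ Y) → rel X (Y ∪ W) Z

variable {V : Type*} [Fintype V] [DecidableEq V]

/-- Two disjoint subsets `A` and `B` of the domain are mutually irrelevant if
`(A, B | Z) ∈ M` for every `Z ⊆ U \ (A ∪ B)`. -/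
def Graphoid.MutuallyIrrelevantSets (M : Graphoid V) (A B : Finset V) : Prop :=
  ∀ Z : Finset V, Z ⊆ Finset.univ \ (A ∪ B) → M.rel A B Z

/-- If `A` and `B` are mutually irrelevant, and `A` and `C` are mutually
irrelevant, then `A` and `B ∪ C` are mutually irrelevant. -/
theorem mutuallyIrrelevantSets_union (M : Graphoid V) (A B C : Finset V)
    (hAB : Disjoint A B) (hAC : Disjoint A C) (hBC : Disjoint B C)
    (h1 : M.MutuallyIrrelevantSets A B) (h2 : M.MutuallyIrrelevantSets A C) :
    M.MutuallyIrrelevantSets A (B ∪ C) := by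
  intro Z hZ
  have hZ' : ∀ x ∈ Z, x ∉ A ∧ x ∉ B ∧ x ∉ C := by
    intro x hx
    have := hZ hx
    simp only [Finset.mem_sdiff, Finset.mem_union, Finset.mem_univ, true_and] at this
    tauto
  apply M.contraction A B C Z
  · apply h1
    intro x hx
    have := hZ' x hx
    simp [Finset.mem_sdiff, Finset.mem_union]
    tauto
  · apply h2
    intro x hx
    simp only [Finset.mem_union] at hx
    simp only [Finset.mem_sdiff, Finset.mem_union, Finset.mem_univ, true_and]
    rcases hx with hx | hx
    · have := hZ' x hx; tauto
    · exact not_or.mpr ⟨fun hA => Finset.disjoint_left.mp hAB hA hx,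
        fun hC => Finset.disjoint_left.mp hBC hx hC⟩
end

section
/- Let M be a graphoid over a finite set U such that for every pair x, y ∈ U, coupled(x,y) implies relevant(x,y). Then M is transitive, i.e., for all x, y, z ∈ U, relevant(x,y) and relevant(y,z) imply relevant(x,z). -/
variable {V : Type*} [Fintype V] [DecidableEq V]

/-- `x` and `y` are uncoupled: there is a partition of the whole domain into two
nonempty sets `U1`, `U2` with `x ∈ U1`, `y ∈ U2` and `(U1, U2 | ∅) ∈ M`. -/
def Graphoid.Uncoupled (M : Graphoid V) (x y : V) : Prop :=
  ∃ U1 U2 : Finset V, U1 ∪ U2 = Finset.univ ∧ Disjoint U1 U2 ∧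
    U1.Nonempty ∧ U2.Nonempty ∧ x ∈ U1 ∧ y ∈ U2 ∧ M.rel U1 U2 ∅

/-- `x` and `y` are mutually irrelevant: `({x}, {y} | Z) ∈ M` for every
`Z ⊆ U \ {x, y}`. -/
def Graphoid.MutuallyIrrelevant (M : Graphoid V) (x y : V) : Prop :=
  ∀ Z : Finset V, Z ⊆ Finset.univ \ {x, y} → M.rel {x} {y} Z

/-- `x` and `y` are coupled if they are not uncoupled. -/
def Graphoid.Coupled (M : Graphoid V) (x y : V) : Prop := ¬ M.Uncoupled x y

/-- `x` and `y` are mutually relevant if they are not mutually irrelevant. -/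
def Graphoid.Relevant (M : Graphoid V) (x y : V) : Prop := ¬ M.MutuallyIrrelevant x y

/-- `M` is transitive if `relevant` is a transitive relation. -/
def Graphoid.IsTransitive (M : Graphoid V) : Prop :=
  ∀ x y z : V, M.Relevant x y → M.Relevant y z → M.Relevant x z


lemma Graphoid.uncoupled_irrelevant (M : Graphoid V) {x y : V}
    (h : M.Uncoupled x y) : M.MutuallyIrrelevant x y := by
  obtain ⟨U1, U2, hun, hdisj, h1, h2, hx, hy, hrel⟩ := h
  intro Z hZ
  have hxZ : x ∉ Z := fun hxZ => by
    have := hZ hxZ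
    simp [Finset.mem_sdiff] at this
  set Z1 := Z ∩ U1 with hZ1
  set Z2 := Z ∩ U2 with hZ2
  have hZeq : Z1 ∪ Z2 = Z := by
    rw [hZ1, hZ2, ← Finset.inter_union_distrib_left, hun, Finset.inter_univ]
  -- decompose U2
  have hsub2 : {y} ∪ Z2 ⊆ U2 := by
    intro a ha
    rcases Finset.mem_union.mp ha with ha | ha
    · simpa only [Finset.mem_singleton.mp ha]
    · exact (Finset.mem_inter.mp ha).2
  have e2 : ({y} ∪ Z2) ∪ (U2 \ ({y} ∪ Z2)) = U2 := Finset.union_sdiff_of_subset hsub2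
  have r1 : M.rel U1 (({y} ∪ Z2) ∪ (U2 \ ({y} ∪ Z2))) ∅ := by rw [e2]; exact hrel
  have r2 : M.rel U1 ({y} ∪ Z2) ∅ := M.decomposition _ _ _ _ r1
  have r3 : M.rel U1 {y} (∅ ∪ Z2) := M.weakUnion _ _ _ _ r2
  rw [Finset.empty_union] at r3
  have r4 : M.rel {y} U1 Z2 := M.symm _ _ _ r3
  have hsub1 : {x} ∪ Z1 ⊆ U1 := by
    intro a ha
    rcases Finset.mem_union.mp ha with ha | ha
    · simpa only [Finset.mem_singleton.mp ha]
    · exact (Finset.mem_inter.mp ha).2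
  have e1 : ({x} ∪ Z1) ∪ (U1 \ ({x} ∪ Z1)) = U1 := Finset.union_sdiff_of_subset hsub1
  have r5 : M.rel {y} (({x} ∪ Z1) ∪ (U1 \ ({x} ∪ Z1))) Z2 := by rw [e1]; exact r4
  have r6 : M.rel {y} ({x} ∪ Z1) Z2 := M.decomposition _ _ _ _ r5
  have r7 : M.rel {y} {x} (Z2 ∪ Z1) := M.weakUnion _ _ _ _ r6
  have r8 : M.rel {x} {y} (Z2 ∪ Z1) := M.symm _ _ _ r7
  rwa [Finset.union_comm, hZeq] at r8

/-- If for every pair `x, y`, `coupled(x,y)` implies `relevant(x,y)`,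
then `M` is a transitive graphoid. -/
theorem transitive_of_coupled_implies_relevant (M : Graphoid V)
    (h : ∀ x y : V, M.Coupled x y → M.Relevant x y) : M.IsTransitive := by
  intro x y z hxy hyz hirr
  have hunc : M.Uncoupled x z := by
    by_contra hc
    exact (h x z hc) hirr
  obtain ⟨U1, U2, hun, hdisj, h1, h2, hx, hz, hrel⟩ := hunc
  have hy : y ∈ U1 ∪ U2 := by rw [hun]; exact Finset.mem_univ y
  rcases Finset.mem_union.mp hy with hy1 | hy2
  · exact hyz (M.uncoupled_irrelevant ⟨U1, U2, hun, hdisj, h1, h2, hy1, hz, hrel⟩)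
  · exact hxy (M.uncoupled_irrelevant ⟨U1, U2, hun, hdisj, h1, h2, hx, hy2, hrel⟩)
end

section
/- Let D be a Bayesian network of a graphoid M over a finite set U, let x ∈ U, let Z be the set of parents of x in D, and let Y be the set of all nodes of U that are neither descendants of x nor parents of x (and not x itself). Then ({x}, Y | Z) ∈ M. -/
variable {V : Type*} [Fintype V] [DecidableEq V]

/-- A Bayesian network of a graphoid `M` over `V`: an ordering of the
elements of `V` (given by the equivalence `ord` with `Fin (card V)`) together
with, for each node `v`, a set `parents v` of nodes preceding `v` in the
ordering such that `({v}, {predecessors of v} \ parents v | parents v) ∈ M`;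
there is a link from each parent of `v` to `v`. -/
structure BayesNet {V : Type*} [Fintype V] [DecidableEq V] (M : Graphoid V) where
  ord : V ≃ Fin (Fintype.card V)
  parents : V → Finset V
  parents_lt : ∀ v w, w ∈ parents v → ord w < ord v
  indep : ∀ v, M.rel {v}
    ((Finset.univ.filter fun w => ord w < ord v) \ parents v) (parents v)

/-- `D` is minimal if for no node `v` a proper subset of its parent set
satisfies the defining independence condition. -/
def BayesNet.Minimal {M : Graphoid V} (D : BayesNet M) : Prop :=
  ∀ v : V, ∀ Q : Finset V, Q ⊂ D.parents v →
    ¬ M.rel {v} ((Finset.univ.filter fun w => D.ord w < D.ord v) \ Q) Q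

/-- The underlying undirected graph of the Bayesian network `D`:
`a` and `b` are adjacent iff there is a link between them (in either
direction). -/
def BayesNet.graph {M : Graphoid V} (D : BayesNet M) : SimpleGraph V where
  Adj a b := a ∈ D.parents b ∨ b ∈ D.parents a
  symm := by
    constructor
    intro a b h
    exact h.symm
  loopless := by
    constructor
    intro a h
    rcases h with h | h <;> exact absurd (D.parents_lt a a h) (lt_irrefl _)

/-- `y` is a descendant of `x` in `D` if there is a directed path of length
greater than zero from `x` to `y` (each link going from a parent to its
child). -/
def BayesNet.Descendant {M : Graphoid V} (D : BayesNet M) (x y : V) : Prop :=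
  Relation.TransGen (fun a b : V => a ∈ D.parents b) x y

/-- Let `Z` be the set of parents of `x` in `D` and `Y` the set of all nodes
that are neither descendants of `x` nor parents of `x` (and not `x` itself).
Then `({x}, Y | Z) ∈ M`. -/
theorem rel_nondescendants {M : Graphoid V} (D : BayesNet M) (x : V)
    (Y : Finset V)
    (hY : ∀ w : V, w ∈ Y ↔ (w ≠ x ∧ w ∉ D.parents x ∧ ¬ D.Descendant x w)) :
    M.rel {x} Y (D.parents x) := by
  classical
  have hdesc : ∀ a b : V, D.Descendant a b → D.ord a < D.ord b := by
    intro a b h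
    induction h with
    | single h => exact D.parents_lt _ _ h
    | tail _ h ih => exact ih.trans (D.parents_lt _ _ h)
  have key : ∀ k : ℕ, M.rel {x}
      (Y.filter fun w => (D.ord w : ℕ) < (D.ord x : ℕ) + 1 + k) (D.parents x) := by
    intro k
    induction k with
    | zero =>
      have heq : (Y.filter fun w => (D.ord w : ℕ) < (D.ord x : ℕ) + 1 + 0)
          = (Finset.univ.filter fun w => D.ord w < D.ord x) \ D.parents x := by
        ext w
        simp only [Finset.mem_filter, Finset.mem_sdiff, Finset.mem_univ, true_and, hY]
        constructor
        · rintro ⟨⟨hne, hnp, _⟩, hlt⟩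
          refine ⟨?_, hnp⟩
          have : (D.ord w : ℕ) ≠ (D.ord x : ℕ) := fun h =>
            hne (D.ord.injective (Fin.ext h))
          exact Fin.lt_def.mpr (by omega)
        · rintro ⟨hlt, hnp⟩
          have hlt' : (D.ord w : ℕ) < (D.ord x : ℕ) := Fin.lt_def.mp hlt
          refine ⟨⟨fun h => by subst h; exact lt_irrefl _ hlt', hnp, fun hd => ?_⟩, by omega⟩
          exact absurd (Fin.lt_def.mp (hdesc _ _ hd)) (by omega)
      rw [heq]; exact D.indep x
    | succ k ih =>
      by_cases hk : (D.ord x : ℕ) + 1 + k < Fintype.card V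
      · set v := D.ord.symm ⟨(D.ord x : ℕ) + 1 + k, hk⟩ with hv
        have hordv : (D.ord v : ℕ) = (D.ord x : ℕ) + 1 + k := by
          rw [hv, Equiv.apply_symm_apply]
        have hwv : ∀ w : V, (D.ord w : ℕ) = (D.ord x : ℕ) + 1 + k → w = v := by
          intro w hw
          exact D.ord.injective (Fin.ext (hw.trans hordv.symm))
        by_cases hvY : v ∈ Y
        · -- v is a non-descendant node to add
          obtain ⟨hvne, hvnp, hvnd⟩ := (hY v).mp hvY
          have hxv : D.ord x < D.ord v := Fin.lt_def.mpr (by omega)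
          have hxnpv : x ∉ D.parents v := fun h => hvnd (Relation.TransGen.single h)
          set T := Y.filter fun w => (D.ord w : ℕ) < (D.ord x : ℕ) + 1 + k with hT
          set S := (Finset.univ.filter fun w => D.ord w < D.ord v) \ D.parents v with hS
          set B := S.filter (fun w => w ≠ x ∧ ¬ D.Descendant x w) with hB
          have hxS : x ∈ S := by
            simp only [hS, Finset.mem_sdiff, Finset.mem_filter, Finset.mem_univ, true_and]
            exact ⟨hxv, hxnpv⟩
          have hSsplit : S = ({x} ∪ B) ∪ (S.filter (fun w => ¬ (w ≠ x ∧ ¬ D.Descendant x w)) \ {x}) := by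
            ext w
            simp only [hB, Finset.mem_union, Finset.mem_sdiff, Finset.mem_filter,
              Finset.mem_singleton]
            constructor
            · intro hw
              by_cases h1 : w = x
              · exact Or.inl (Or.inl h1)
              · by_cases h2 : D.Descendant x w
                · exact Or.inr ⟨⟨hw, fun hc => hc.2 h2⟩, h1⟩
                · exact Or.inl (Or.inr ⟨hw, h1, h2⟩)
            · rintro ((rfl | ⟨hw, _⟩) | ⟨⟨hw, _⟩, _⟩) <;> first | exact hxS | exact hw
          have h1 : M.rel {v} ({x} ∪ B) (D.parents v) := by
            apply M.decomposition _ _ (S.filter (fun w => ¬ (w ≠ x ∧ ¬ D.Descendant x w)) \ {x})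
            rw [← hSsplit]
            exact D.indep v
          have h2 : M.rel {v} {x} (D.parents v ∪ B) := M.weakUnion _ _ _ _ h1
          have hZT : D.parents v ∪ B = D.parents x ∪ T := by
            ext w
            have hchar : (w ∈ D.parents v ∪ B ↔
                ((D.ord w : ℕ) < (D.ord x : ℕ) + 1 + k ∧ w ≠ x ∧ ¬ D.Descendant x w)) := by
              simp only [Finset.mem_union, hB, hS, Finset.mem_filter, Finset.mem_sdiff,
                Finset.mem_univ, true_and]
              constructor
              · rintro (hw | ⟨⟨hlt, hnp⟩, hne, hnd⟩)
                · have hlt : (D.ord w : ℕ) < (D.ord v : ℕ) := Fin.lt_def.mp (D.parents_lt _ _ hw)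
                  refine ⟨by omega, fun h => hxnpv (h ▸ hw), fun hd => ?_⟩
                  exact hvnd (Relation.TransGen.tail hd hw)
                · exact ⟨by have := Fin.lt_def.mp hlt; omega, hne, hnd⟩
              · rintro ⟨hlt, hne, hnd⟩
                by_cases hp : w ∈ D.parents v
                · exact Or.inl hp
                · exact Or.inr ⟨⟨Fin.lt_def.mpr (by omega), hp⟩, hne, hnd⟩
            have hchar2 : (w ∈ D.parents x ∪ T ↔
                ((D.ord w : ℕ) < (D.ord x : ℕ) + 1 + k ∧ w ≠ x ∧ ¬ D.Descendant x w)) := by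
              simp only [Finset.mem_union, hT, Finset.mem_filter, hY]
              constructor
              · rintro (hw | ⟨⟨hne, hnp, hnd⟩, hlt⟩)
                · have hlt : (D.ord w : ℕ) < (D.ord x : ℕ) := Fin.lt_def.mp (D.parents_lt _ _ hw)
                  refine ⟨by omega, fun h => by subst h; omega, fun hd => ?_⟩
                  have := Fin.lt_def.mp (hdesc _ _ hd); omega
                · exact ⟨hlt, hne, hnd⟩
              · rintro ⟨hlt, hne, hnd⟩
                by_cases hp : w ∈ D.parents x
                · exact Or.inl hp
                · exact Or.inr ⟨⟨hne, hp, hnd⟩, hlt⟩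
            rw [hchar, hchar2]
          rw [hZT] at h2
          have h3 : M.rel {x} {v} (D.parents x ∪ T) := M.symm _ _ _ h2
          have h4 : M.rel {x} (T ∪ {v}) (D.parents x) := M.contraction _ _ _ _ ih h3
          have hfinal : (Y.filter fun w => (D.ord w : ℕ) < (D.ord x : ℕ) + 1 + (k + 1))
              = T ∪ {v} := by
            ext w
            simp only [hT, Finset.mem_union, Finset.mem_filter, Finset.mem_singleton]
            constructor
            · rintro ⟨hwY, hlt⟩
              by_cases h : (D.ord w : ℕ) = (D.ord x : ℕ) + 1 + k
              · exact Or.inr (hwv w h)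
              · exact Or.inl ⟨hwY, by omega⟩
            · rintro (⟨hwY, hlt⟩ | rfl)
              · exact ⟨hwY, by omega⟩
              · exact ⟨hvY, by omega⟩
          rw [hfinal]
          exact h4
        · -- v ∉ Y : filter unchanged
          have heq : (Y.filter fun w => (D.ord w : ℕ) < (D.ord x : ℕ) + 1 + (k + 1))
              = Y.filter fun w => (D.ord w : ℕ) < (D.ord x : ℕ) + 1 + k := by
            ext w
            simp only [Finset.mem_filter, and_congr_right_iff]
            intro hwY
            constructor
            · intro hlt
              by_cases h : (D.ord w : ℕ) = (D.ord x : ℕ) + 1 + k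
              · exact absurd (hwv w h ▸ hwY) hvY
              · omega
            · omega
          rw [heq]; exact ih
      · have heq : (Y.filter fun w => (D.ord w : ℕ) < (D.ord x : ℕ) + 1 + (k + 1))
            = Y.filter fun w => (D.ord w : ℕ) < (D.ord x : ℕ) + 1 + k := by
          apply Finset.filter_congr
          intro w _
          have := (D.ord w).isLt
          constructor <;> intro <;> omega
        rw [heq]; exact ih
  have := key (Fintype.card V)
  have heq : (Y.filter fun w => (D.ord w : ℕ) < (D.ord x : ℕ) + 1 + Fintype.card V) = Y := by
    apply Finset.filter_true_of_mem
    intro w _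
    have := (D.ord w).isLt
    omega
  rwa [heq] at this
end

section
/- Let D be a minimal Bayesian network of a graphoid M over a finite set U, let x ∈ U, and suppose the set of parents of x in D is the disjoint union Z1 ∪ Z2. If Z1 ≠ ∅, then ({x}, Z1 | Z2) ∉ M. -/
variable {V : Type*} [Fintype V] [DecidableEq V]

/-- In a minimal Bayesian network `D` of a graphoid `M`, if the parent set of
`x` is the disjoint union `Z1 ∪ Z2` with `Z1 ≠ ∅`, then `({x}, Z1 | Z2) ∉ M`. -/
theorem not_rel_parents_split {M : Graphoid V} (D : BayesNet M)
    (hmin : D.Minimal) (x : V) (Z1 Z2 : Finset V) (hdisj : Disjoint Z1 Z2)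
    (hpar : D.parents x = Z1 ∪ Z2) (hne : Z1.Nonempty) :
    ¬ M.rel {x} Z1 Z2 := by
  intro hrel
  set P : Finset V := Finset.univ.filter fun w => D.ord w < D.ord x with hP
  have hsub : Z1 ∪ Z2 ⊆ P := by
    intro w hw
    simp only [hP, Finset.mem_filter, Finset.mem_univ, true_and]
    exact D.parents_lt x w (hpar ▸ hw)
  have hind := D.indep x
  rw [hpar] at hind
  have hind' : M.rel {x} (P \ (Z1 ∪ Z2)) (Z2 ∪ Z1) := by
    rwa [Finset.union_comm Z2 Z1]
  have hcon := M.contraction {x} Z1 (P \ (Z1 ∪ Z2)) Z2 hrel hind'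
  have heq : Z1 ∪ (P \ (Z1 ∪ Z2)) = P \ Z2 := by
    ext w
    simp only [Finset.mem_union, Finset.mem_sdiff]
    constructor
    · rintro (h | ⟨hw, hw2⟩)
      · exact ⟨hsub (Finset.mem_union_left _ h),
          fun hw2 => (Finset.disjoint_left.mp hdisj h) hw2⟩
      · exact ⟨hw, fun h2 => hw2 (Or.inr h2)⟩
    · rintro ⟨hw, hw2⟩
      by_cases h1 : w ∈ Z1
      · exact Or.inl h1
      · exact Or.inr ⟨hw, by simp [h1, hw2]⟩
  rw [heq] at hcon
  have hss : Z2 ⊂ D.parents x := by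
    rw [hpar]
    refine ⟨Finset.subset_union_right, fun hle => ?_⟩
    obtain ⟨a, ha⟩ := hne
    exact Finset.disjoint_left.mp hdisj ha (hle (Finset.mem_union_left _ ha))
  exact hmin x Z2 hss hcon
end

section
/- There exists a probability distribution P over three variables x, y, z, where x and y each take values in {0,1} and z takes values in {0,1}×{0,1}, such that x and y are mutually irrelevant with respect to P (both I(x, y | ∅) and I(x, y | z) hold for P) but x and y are coupled (neither I({x}, {y,z} | ∅) nor I({x,z}, {y} | ∅) holds for P). A witness is the distribution in which x and y are independent uniform bits and z = (x, y) with probability one. -/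
variable {ι : Type*} [Fintype ι] [DecidableEq ι] {Ω : ι → Type*}
  [∀ i, Fintype (Ω i)] [∀ i, DecidableEq (Ω i)]

/-- The marginal probability, under the distribution `P` on joint value
assignments, of the event that the variables in `S` take the values given by
the assignment `s`. -/
def margin (P : (∀ i, Ω i) → ℝ) (S : Finset ι) (s : ∀ i, Ω i) : ℝ :=
  ∑ ω : ∀ i, Ω i, if ∀ i ∈ S, ω i = s i then P ω else 0

/-- `I(X, Y | Z)` holds for `P` : conditional independence of `X` and `Y`
given `Z`, stated in the product form `P(X,Y,Z)·P(Z) = P(X,Z)·P(Y,Z)` for all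
value assignments, which is equivalent to
`P(X,Y | Z=z) = P(X | Z=z)·P(Y | Z=z)` whenever `P(Z=z) > 0`. -/
def CondIndep (P : (∀ i, Ω i) → ℝ) (X Y Z : Finset ι) : Prop :=
  ∀ s : ∀ i, Ω i,
    margin P (X ∪ Y ∪ Z) s * margin P Z s = margin P (X ∪ Z) s * margin P (Y ∪ Z) s

/-- The value domains of the three variables: `x` and `y` are bits, `z` takes
values in `{0,1} × {0,1}`. -/
def Ω3 : Fin 3 → Type
  | 0 => Bool
  | 1 => Bool
  | 2 => Bool × Bool

instance : ∀ i, Fintype (Ω3 i)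
  | 0 => inferInstanceAs (Fintype Bool)
  | 1 => inferInstanceAs (Fintype Bool)
  | 2 => inferInstanceAs (Fintype (Bool × Bool))

instance : ∀ i, DecidableEq (Ω3 i)
  | 0 => inferInstanceAs (DecidableEq Bool)
  | 1 => inferInstanceAs (DecidableEq Bool)
  | 2 => inferInstanceAs (DecidableEq (Bool × Bool))

/-- Integer-valued (unnormalized) witness distribution: mass `1` on each
assignment with `z = (x, y)`, mass `0` elsewhere; total mass `4`. -/
def qZ : (∀ i, Ω3 i) → ℤ := fun ω =>
  @ite _ ((ω 2 : Bool × Bool) = ((ω 0 : Bool), (ω 1 : Bool)))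
    (instDecidableEqProd (ω 2 : Bool × Bool) ((ω 0 : Bool), (ω 1 : Bool))) 1 0

/-- Integer version of `margin`. -/
def marginZ (P : (∀ i, Ω3 i) → ℤ) (S : Finset (Fin 3)) (s : ∀ i, Ω3 i) : ℤ :=
  ∑ ω : ∀ i, Ω3 i, if ∀ i ∈ S, ω i = s i then P ω else 0

/-- Integer version of `CondIndep`. -/
def CondIndepZ (P : (∀ i, Ω3 i) → ℤ) (X Y Z : Finset (Fin 3)) : Prop :=
  ∀ s : ∀ i, Ω3 i,
    marginZ P (X ∪ Y ∪ Z) s * marginZ P Z s = marginZ P (X ∪ Z) s * marginZ P (Y ∪ Z) s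

instance (P : (∀ i, Ω3 i) → ℤ) (X Y Z : Finset (Fin 3)) :
    Decidable (CondIndepZ P X Y Z) := by unfold CondIndepZ; infer_instance

lemma margin_cast (P : (∀ i, Ω3 i) → ℤ) (S : Finset (Fin 3)) (s : ∀ i, Ω3 i) :
    margin (fun ω => (P ω : ℝ) / 4) S s = (marginZ P S s : ℝ) / 4 := by
  rw [margin, marginZ, Int.cast_sum, Finset.sum_div]
  refine Finset.sum_congr rfl fun ω _ => ?_
  split <;> simp

lemma condIndep_iff_Z (P : (∀ i, Ω3 i) → ℤ) (X Y Z : Finset (Fin 3)) :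
    CondIndep (fun ω => (P ω : ℝ) / 4) X Y Z ↔ CondIndepZ P X Y Z := by
  unfold CondIndep CondIndepZ
  refine forall_congr' fun s => ?_
  rw [margin_cast, margin_cast, margin_cast, margin_cast, div_mul_div_comm, div_mul_div_comm,
    ← Int.cast_mul, ← Int.cast_mul, div_eq_div_iff (by norm_num) (by norm_num),
    mul_left_inj' (by norm_num : ((4:ℝ) * 4) ≠ 0)]
  exact Int.cast_inj

/-- There is a probability distribution `P` over the three variables
`x = 0`, `y = 1`, `z = 2` such that `x` and `y` are mutually irrelevant
(both `I(x, y | ∅)` and `I(x, y | z)` hold for `P`) but `x` and `y` are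
coupled (neither `I({x}, {y,z} | ∅)` nor `I({x,z}, {y} | ∅)` holds for `P`);
a witness is the distribution in which `x` and `y` are independent uniform
bits and `z = (x, y)` with probability one. -/
theorem mutually_irrelevant_but_coupled :
    ∃ P : (∀ i, Ω3 i) → ℝ, (∀ ω, 0 ≤ P ω) ∧ (∑ ω, P ω = 1) ∧
      CondIndep P {0} {1} ∅ ∧ CondIndep P {0} {1} {2} ∧
      ¬ CondIndep P {0} ({1} ∪ {2}) ∅ ∧ ¬ CondIndep P ({0} ∪ {2}) {1} ∅ := by
  refine ⟨fun ω => (qZ ω : ℝ) / 4, ?_, ?_, ?_, ?_, ?_, ?_⟩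
  · intro ω
    have h : (0:ℤ) ≤ qZ ω := by
      unfold qZ
      generalize instDecidableEqProd (ω 2 : Bool × Bool) ((ω 0 : Bool), (ω 1 : Bool)) = d
      cases d
      · exact le_refl 0
      · exact zero_le_one
    exact div_nonneg (by exact_mod_cast h) (by norm_num)
  · have h : (∑ ω, qZ ω) = 4 := by decide +kernel
    rw [← Finset.sum_div, ← Int.cast_sum, h]
    norm_num
  · exact (condIndep_iff_Z _ _ _ _).2 (by decide +kernel)
  · exact (condIndep_iff_Z _ _ _ _).2 (by decide +kernel)
  · exact fun hc => (by decide +kernel : ¬ CondIndepZ qZ {0} ({1} ∪ {2}) ∅)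
      ((condIndep_iff_Z _ _ _ _).1 hc)
  · exact fun hc => (by decide +kernel : ¬ CondIndepZ qZ ({0} ∪ {2}) {1} ∅)
      ((condIndep_iff_Z _ _ _ _).1 hc)
end

section
/- Let X and Y be two disjoint sets of variables, let e be a binary variable not in X ∪ Y, and let P be a strictly positive probability distribution over X ∪ Y ∪ {e}. If I(X, Y | e = e₀) holds for P for a value e₀ of e, then for every pair of instances X', X'' of X and every pair of instances Y', Y'' of Y: [P(e₀ | X', Y')·P(X', Y')] / [P(e₀ | X'', Y')·P(X'', Y')] = [P(e₀ | X', Y'')·P(X', Y'')] / [P(e₀ | X'', Y'')·P(X'', Y'')]. -/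
variable {ι : Type*} [Fintype ι] [DecidableEq ι] {Ω : ι → Type*}
  [∀ i, Fintype (Ω i)] [∀ i, DecidableEq (Ω i)]

/-- `I(X, Y | e = e₀)` holds for `P` : conditional independence of `X` and
`Y` given that the variable `e` takes the specific value `e₀`. -/
def CondIndepGivenVal (P : (∀ i, Ω i) → ℝ) (X Y : Finset ι) (e : ι) (e₀ : Ω e) : Prop :=
  ∀ s : ∀ i, Ω i, s e = e₀ →
    margin P (X ∪ Y ∪ {e}) s * margin P {e} s =
      margin P (X ∪ {e}) s * margin P (Y ∪ {e}) s

/-- The joint assignment giving each variable of `X` its value under `x`,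
the variable `e` the value `e₀`, and every other variable its value under
`y`. -/
def instAsg (X : Finset ι) (e : ι) (e₀ : Ω e) (x y : ∀ i, Ω i) : ∀ i, Ω i :=
  Function.update (fun i => if i ∈ X then x i else y i) e e₀

/-- The conditional probability `P(e = e₀ | X = x, Y = y)`. -/
noncomputable def condProbE (P : (∀ i, Ω i) → ℝ) (X Y : Finset ι)
    (e : ι) (e₀ : Ω e) (x y : ∀ i, Ω i) : ℝ :=
  margin P ({e} ∪ X ∪ Y) (instAsg X e e₀ x y) / margin P (X ∪ Y) (instAsg X e e₀ x y)


lemma margin_pos (P : (∀ i, Ω i) → ℝ) (hpos : ∀ ω, 0 < P ω) (S : Finset ι)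
    (s : ∀ i, Ω i) : 0 < margin P S s := by
  unfold margin
  apply Finset.sum_pos'
  · intro ω _
    split
    · exact (hpos ω).le
    · exact le_refl 0
  · refine ⟨s, Finset.mem_univ s, ?_⟩
    rw [if_pos fun i _ => rfl]
    exact hpos s

lemma margin_eq_of_agree (P : (∀ i, Ω i) → ℝ) (S : Finset ι) {s t : ∀ i, Ω i}
    (h : ∀ i ∈ S, s i = t i) : margin P S s = margin P S t := by
  unfold margin
  refine Finset.sum_congr rfl fun ω _ => if_congr ?_ rfl rfl
  exact ⟨fun h' i hi => (h' i hi).trans (h i hi),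
    fun h' i hi => (h' i hi).trans (h i hi).symm⟩


/-- Lemma (Bayes-ratio) : if `I(X, Y | e = e₀)` holds for the strictly
positive distribution `P`, with `e` a binary variable not in `X ∪ Y`, then
for every pair of instances `x', x''` of `X` and `y', y''` of `Y`,
`[P(e₀|X',Y')·P(X',Y')] / [P(e₀|X'',Y')·P(X'',Y')] =
 [P(e₀|X',Y'')·P(X',Y'')] / [P(e₀|X'',Y'')·P(X'',Y'')]`. -/
theorem bayes_ratio_of_condIndepGivenVal
    (X Y : Finset ι) (hXY : Disjoint X Y) (e : ι) (he : e ∉ X ∪ Y)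
    (hbin : Fintype.card (Ω e) = 2)
    (P : (∀ i, Ω i) → ℝ) (hpos : ∀ ω, 0 < P ω) (hsum : ∑ ω, P ω = 1)
    (e₀ : Ω e) (hI : CondIndepGivenVal P X Y e e₀)
    (x' x'' y' y'' : ∀ i, Ω i) :
    (condProbE P X Y e e₀ x' y' * margin P (X ∪ Y) (instAsg X e e₀ x' y')) /
        (condProbE P X Y e e₀ x'' y' * margin P (X ∪ Y) (instAsg X e e₀ x'' y')) =
      (condProbE P X Y e e₀ x' y'' * margin P (X ∪ Y) (instAsg X e e₀ x' y'')) /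
        (condProbE P X Y e e₀ x'' y'' * margin P (X ∪ Y) (instAsg X e e₀ x'' y'')) := by
  classical
  have heX : e ∉ X := fun h => he (Finset.mem_union_left _ h)
  have heY : e ∉ Y := fun h => he (Finset.mem_union_right _ h)
  have hval : ∀ (x y : ∀ i, Ω i) (i : ι), i ≠ e →
      instAsg X e e₀ x y i = if i ∈ X then x i else y i := by
    intro x y i hi
    simp [instAsg, Function.update_of_ne hi]
  have hvale : ∀ (x y : ∀ i, Ω i), instAsg X e e₀ x y e = e₀ := by
    intro x y; simp [instAsg]
  set f : (∀ i, Ω i) → (∀ i, Ω i) → ℝ :=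
    fun x y => margin P ({e} ∪ X ∪ Y) (instAsg X e e₀ x y) with hf
  set a : (∀ i, Ω i) → ℝ :=
    fun x => margin P (X ∪ {e}) (instAsg X e e₀ x y') with ha
  set b : (∀ i, Ω i) → ℝ :=
    fun y => margin P (Y ∪ {e}) (instAsg X e e₀ x' y) with hb
  set c : ℝ := margin P {e} (instAsg X e e₀ x' y') with hc
  have hXeq : ∀ (x y : ∀ i, Ω i),
      margin P (X ∪ {e}) (instAsg X e e₀ x y) = a x := by
    intro x y
    refine margin_eq_of_agree P _ fun i hi => ?_
    by_cases hie : i = e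
    · subst hie; rw [hvale, hvale]
    · rw [hval _ _ _ hie, hval _ _ _ hie]
      have hiX : i ∈ X := (Finset.mem_union.1 hi).resolve_right
        (fun h => hie (Finset.mem_singleton.1 h))
      simp [hiX]
  have hYeq : ∀ (x y : ∀ i, Ω i),
      margin P (Y ∪ {e}) (instAsg X e e₀ x y) = b y := by
    intro x y
    refine margin_eq_of_agree P _ fun i hi => ?_
    by_cases hie : i = e
    · subst hie; rw [hvale, hvale]
    · rw [hval _ _ _ hie, hval _ _ _ hie]
      rcases Finset.mem_union.1 hi with hiY | hie2
      · have hiX : i ∉ X := fun h => (Finset.disjoint_left.1 hXY h) hiY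
        simp [hiX]
      · exact absurd (Finset.mem_singleton.1 hie2) hie
  have hceq : ∀ (x y : ∀ i, Ω i),
      margin P {e} (instAsg X e e₀ x y) = c := by
    intro x y
    refine margin_eq_of_agree P _ fun i hi => ?_
    rw [Finset.mem_singleton.1 hi, hvale, hvale]
  have hUeq : ({e} : Finset ι) ∪ X ∪ Y = X ∪ Y ∪ {e} := by
    ext i; simp [Finset.mem_union, or_comm, or_assoc, or_left_comm]
  have hprod : ∀ (x y : ∀ i, Ω i), f x y * c = a x * b y := by
    intro x y
    have h := hI (instAsg X e e₀ x y) (hvale x y)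
    rw [hXeq, hYeq, hceq] at h
    rw [hf]; simp only []
    rw [hUeq]
    exact h
  have hfpos : ∀ (x y : ∀ i, Ω i), 0 < f x y := fun x y => margin_pos P hpos _ _
  have hcpos : 0 < c := margin_pos P hpos _ _
  have hmpos : ∀ (x y : ∀ i, Ω i), 0 < margin P (X ∪ Y) (instAsg X e e₀ x y) :=
    fun x y => margin_pos P hpos _ _
  have hcollapse : ∀ (x y : ∀ i, Ω i),
      condProbE P X Y e e₀ x y * margin P (X ∪ Y) (instAsg X e e₀ x y) = f x y := by
    intro x y
    rw [condProbE, div_mul_cancel₀ _ (hmpos x y).ne']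
  rw [hcollapse, hcollapse, hcollapse, hcollapse]
  rw [div_eq_div_iff (hfpos _ _).ne' (hfpos _ _).ne']
  have h11 := hprod x' y'
  have h12 := hprod x' y''
  have h21 := hprod x'' y'
  have h22 := hprod x'' y''
  have key : f x' y' * f x'' y'' * (c * c) = f x' y'' * f x'' y' * (c * c) := by
    linear_combination (f x'' y'' * c) * h11 + (a x' * b y') * h22
      - (f x'' y' * c) * h12 - (a x' * b y'') * h21
  exact mul_right_cancel₀ (mul_pos hcpos hcpos).ne' key
end

section
/- Let P be a probability distribution over a finite set of variables such that P, together with every distribution obtained from P by marginalizing out some variables and conditioning on specific values of others, satisfies the following property: for a designated variable e and any three partitions {X1,X2}, {Y1,Y2}, {Z1,Z2} of the remaining variables U, if I(X1,X2|∅), I(Y1,Y2|e=e'), and I(Z1,Z2|e=e'') hold (e', e'' distinct values of e), then, with R1 = X1∩Y1∩Z1 and R2 = X2∩Y2∩Z2, either I(R1, {e}∪(U\R1) | ∅) or I(R2, {e}∪(U\R2) | ∅) holds. Then P is transitive: for all variables x, y, z, relevant(x,y) and relevant(y,z) imply relevant(x,z). -/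
variable {ι : Type*} [Fintype ι] [DecidableEq ι] {Ω : ι → Type*}
  [∀ i, Fintype (Ω i)] [∀ i, DecidableEq (Ω i)]

/-- `I(X, Y | Z, C = c)` holds for `P` : conditional independence of `X` and
`Y` given the variables of `Z` (ranging over all their values) and the
variables of `C` fixed to their values under the assignment `c`, again in the
product form. -/
def CondIndepCond (P : (∀ i, Ω i) → ℝ) (X Y Z : Finset ι)
    (C : Finset ι) (c : ∀ i, Ω i) : Prop :=
  ∀ s : ∀ i, Ω i, (∀ i ∈ C, s i = c i) →
    margin P (X ∪ Y ∪ (Z ∪ C)) s * margin P (Z ∪ C) s =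
      margin P (X ∪ (Z ∪ C)) s * margin P (Y ∪ (Z ∪ C)) s

/-- `{A, B}` is a partition of `T`: `A ∪ B = T`, `A ∩ B = ∅`, `A ≠ ∅`,
`B ≠ ∅`. -/
def IsPartitionOf (T A B : Finset ι) : Prop :=
  A ∪ B = T ∧ Disjoint A B ∧ A.Nonempty ∧ B.Nonempty

/-- Variables `x` and `y` are mutually irrelevant with respect to `P` :
`I({x}, {y} | Z)` holds for every `Z ⊆ U \ {x, y}`. -/
def MutuallyIrrelevant (P : (∀ i, Ω i) → ℝ) (x y : ι) : Prop :=
  ∀ Z : Finset ι, Z ⊆ Finset.univ \ {x, y} → CondIndep P {x} {y} Z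

/-- `x` and `y` are mutually relevant if they are not mutually irrelevant. -/
def Relevant (P : (∀ i, Ω i) → ℝ) (x y : ι) : Prop := ¬ MutuallyIrrelevant P x y

set_option linter.unusedSectionVars false

variable {P : (∀ i, Ω i) → ℝ}

lemma margin_nonneg (hpos : ∀ ω, 0 ≤ P ω) (T : Finset ι) (s : ∀ i, Ω i) :
    0 ≤ margin P T s := by
  refine Finset.sum_nonneg fun ω _ => ?_
  split <;> simp [hpos]

lemma margin_mono (hpos : ∀ ω, 0 ≤ P ω) {T T' : Finset ι} (h : T ⊆ T') (s : ∀ i, Ω i) :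
    margin P T' s ≤ margin P T s := by
  refine Finset.sum_le_sum fun ω _ => ?_
  by_cases hc : ∀ i ∈ T', ω i = s i
  · rw [if_pos hc, if_pos fun i hi => hc i (h hi)]
  · rw [if_neg hc]
    split <;> simp [hpos]

lemma margin_congr {T : Finset ι} {s s' : ∀ i, Ω i} (h : ∀ i ∈ T, s i = s' i) :
    margin P T s = margin P T s' := by
  refine Finset.sum_congr rfl fun ω _ => ?_
  refine if_congr ⟨fun hc i hi => (hc i hi).trans (h i hi), fun hc i hi => (hc i hi).trans (h i hi).symm⟩ rfl rfl

lemma margin_empty (s : ∀ i, Ω i) : margin P ∅ s = ∑ ω, P ω := by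
  simp [margin]

lemma margin_univ (s : ∀ i, Ω i) : margin P Finset.univ s = P s := by
  unfold margin
  rw [Finset.sum_congr rfl (fun ω _ => if_congr (show (∀ i ∈ Finset.univ, ω i = s i) ↔ ω = s by
    simp [funext_iff]) rfl rfl)]
  simp

lemma sum_margin_insert {a : ι} {T : Finset ι} (haT : a ∉ T) (s : ∀ i, Ω i) :
    ∑ v : Ω a, margin P (insert a T) (Function.update s a v) = margin P T s := by
  unfold margin
  rw [Finset.sum_comm]
  refine Finset.sum_congr rfl fun ω _ => ?_
  have key : ∀ v : Ω a, (∀ i ∈ insert a T, ω i = Function.update s a v i) ↔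
      (v = ω a ∧ ∀ i ∈ T, ω i = s i) := by
    intro v
    constructor
    · intro hc
      have ha := hc a (Finset.mem_insert_self a T)
      rw [Function.update_self] at ha
      refine ⟨ha.symm, fun i hi => ?_⟩
      have hne : i ≠ a := fun h => haT (h ▸ hi)
      simpa [Function.update_of_ne hne] using hc i (Finset.mem_insert_of_mem hi)
    · rintro ⟨rfl, hc⟩ i hi
      rcases Finset.mem_insert.mp hi with rfl | hi
      · rw [Function.update_self]
      · have hne : i ≠ a := fun h => haT (h ▸ hi)
        simpa [Function.update_of_ne hne] using hc i hi
  rw [Finset.sum_congr rfl fun v _ => if_congr (key v) rfl rfl]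
  by_cases hc : ∀ i ∈ T, ω i = s i
  · rw [if_pos hc]
    rw [Finset.sum_congr rfl fun v _ => if_congr (and_iff_left hc) rfl rfl]
    simp
  · rw [if_neg hc]
    rw [Finset.sum_congr rfl (fun v _ => if_neg (fun h => hc h.2))]
    simp

lemma margin_insert_of_forced {a : ι} (hsub : ∀ v w : Ω a, v = w) (T : Finset ι) (s : ∀ i, Ω i) :
    margin P (insert a T) s = margin P T s := by
  refine Finset.sum_congr rfl fun ω _ => ?_
  refine if_congr ⟨fun hc i hi => hc i (Finset.mem_insert_of_mem hi), fun hc i hi => ?_⟩ rfl rfl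
  rcases Finset.mem_insert.mp hi with rfl | hi
  · exact hsub _ _
  · exact hc i hi

lemma condIndepCond_of_condIndep {X Y Z : Finset ι} (h : CondIndep P X Y Z)
    (c : ∀ i, Ω i) : CondIndepCond P X Y ∅ Z c := by
  intro s _
  simpa using h s

lemma condIndepCond_symm {X Y D : Finset ι} {d : ∀ i, Ω i}
    (h : CondIndepCond P X Y ∅ D d) : CondIndepCond P Y X ∅ D d := by
  intro s hs
  rw [Finset.union_comm Y X]
  exact (h s hs).trans (mul_comm _ _)

lemma mutuallyIrrelevant_symm {a b : ι} (h : MutuallyIrrelevant P a b) :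
    MutuallyIrrelevant P b a := by
  intro Z hZ s
  have hZ' : Z ⊆ Finset.univ \ {a, b} := by rwa [Finset.pair_comm b a] at hZ
  have := h Z hZ' s
  rw [Finset.union_comm {a} {b}] at this
  exact this.trans (mul_comm _ _)

lemma factor_margin {G1 G2 : Finset ι}
    (hfac : ∀ s, P s = margin P G1 s * margin P G2 s)
    (hd : Disjoint G1 G2) (hu : G1 ∪ G2 = Finset.univ) :
    ∀ (T : Finset ι) (s : ∀ i, Ω i),
      margin P T s = margin P (T ∩ G1) s * margin P (T ∩ G2) s := by
  suffices key : ∀ (K : Finset ι) (T : Finset ι), Tᶜ = K → ∀ s,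
      margin P T s = margin P (T ∩ G1) s * margin P (T ∩ G2) s by
    intro T s; exact key Tᶜ T rfl s
  intro K
  induction K using Finset.induction_on with
  | empty =>
    intro T hT s
    have : T = Finset.univ := by
      have := congrArg (·ᶜ) hT
      simpa using this
    subst this
    rw [margin_univ, Finset.univ_inter, Finset.univ_inter]
    exact hfac s
  | @insert a K haK ih =>
    intro T hT s
    have haT : a ∉ T := by
      have : a ∈ Tᶜ := hT ▸ Finset.mem_insert_self a K
      simpa using this
    have hT' : (insert a T)ᶜ = K := by
      rw [Finset.insert_eq, Finset.compl_union, hT]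
      ext i
      simp only [Finset.mem_inter, Finset.mem_compl, Finset.mem_singleton, Finset.mem_insert]
      constructor
      · rintro ⟨h1, h2 | h2⟩
        · exact absurd h2 h1
        · exact h2
      · intro hi
        exact ⟨fun h => haK (h ▸ hi), Or.inr hi⟩
    -- a is in exactly one of G1, G2
    have haG : a ∈ G1 ∨ a ∈ G2 := by
      have : a ∈ G1 ∪ G2 := hu ▸ Finset.mem_univ a
      simpa using this
    have step : ∀ (Gl Gr : Finset ι), a ∈ Gl → a ∉ Gr → T ∩ Gl ∪ T ∩ Gr = T ∩ G1 ∪ T ∩ G2 →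
        (∀ v, margin P (insert a T) (Function.update s a v)
          = margin P (insert a T ∩ Gl) (Function.update s a v)
            * margin P (insert a T ∩ Gr) (Function.update s a v)) →
        margin P T s = margin P (T ∩ Gl) s * margin P (T ∩ Gr) s := by
      intro Gl Gr haGl haGr _ hfold
      have h1 : insert a T ∩ Gl = insert a (T ∩ Gl) := by
        ext i
        simp only [Finset.mem_inter, Finset.mem_insert]
        constructor
        · rintro ⟨rfl | hi, hG⟩
          · exact Or.inl rfl
          · exact Or.inr ⟨hi, hG⟩
        · rintro (rfl | ⟨hi, hG⟩)
          · exact ⟨Or.inl rfl, haGl⟩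
          · exact ⟨Or.inr hi, hG⟩
      have h2 : insert a T ∩ Gr = T ∩ Gr := by
        ext i
        simp only [Finset.mem_inter, Finset.mem_insert]
        constructor
        · rintro ⟨rfl | hi, hG⟩
          · exact absurd hG haGr
          · exact ⟨hi, hG⟩
        · rintro ⟨hi, hG⟩
          exact ⟨Or.inr hi, hG⟩
      have haTGl : a ∉ T ∩ Gl := fun h => haT (Finset.mem_inter.mp h).1
      have haTGr : a ∉ T ∩ Gr := fun h => haT (Finset.mem_inter.mp h).1
      calc margin P T s = ∑ v : Ω a, margin P (insert a T) (Function.update s a v) :=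
            (sum_margin_insert haT s).symm
        _ = ∑ v : Ω a, margin P (insert a (T ∩ Gl)) (Function.update s a v)
              * margin P (T ∩ Gr) s := by
            refine Finset.sum_congr rfl fun v _ => ?_
            rw [hfold v, h1, h2]
            congr 1
            refine margin_congr fun i hi => ?_
            have : i ≠ a := fun h => haTGr (h ▸ hi)
            simp [Function.update_of_ne this]
        _ = (∑ v : Ω a, margin P (insert a (T ∩ Gl)) (Function.update s a v))
              * margin P (T ∩ Gr) s := by rw [Finset.sum_mul]
        _ = margin P (T ∩ Gl) s * margin P (T ∩ Gr) s := by
            rw [sum_margin_insert haTGl s]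
    rcases haG with haG1 | haG2
    · have haG2 : a ∉ G2 := Finset.disjoint_left.mp hd haG1
      exact step G1 G2 haG1 haG2 rfl (fun v => ih (insert a T) hT' (Function.update s a v))
    · have haG1 : a ∉ G1 := Finset.disjoint_right.mp hd haG2
      have := step G2 G1 haG2 haG1 (Finset.union_comm _ _) (fun v => by
        rw [ih (insert a T) hT' (Function.update s a v)]; ring)
      rw [this]; ring

lemma mutuallyIrrelevant_of_factor {G1 G2 : Finset ι} {a b : ι}
    (hfac : ∀ s, P s = margin P G1 s * margin P G2 s)
    (hd : Disjoint G1 G2) (hu : G1 ∪ G2 = Finset.univ)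
    (ha : a ∈ G1) (hb : b ∈ G2) : MutuallyIrrelevant P a b := by
  have hbG1 : b ∉ G1 := Finset.disjoint_right.mp hd hb
  have haG2 : a ∉ G2 := Finset.disjoint_left.mp hd ha
  intro Z _ s
  have C2 := factor_margin hfac hd hu
  have e1 : ({a} ∪ {b} ∪ Z) ∩ G1 = {a} ∪ (Z ∩ G1) := by
    ext i
    simp only [Finset.mem_inter, Finset.mem_union, Finset.mem_singleton]
    constructor
    · rintro ⟨(rfl | rfl) | hi, hG⟩
      · exact Or.inl rfl
      · exact absurd hG hbG1
      · exact Or.inr ⟨hi, hG⟩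
    · rintro (rfl | ⟨hi, hG⟩)
      · exact ⟨Or.inl (Or.inl rfl), ha⟩
      · exact ⟨Or.inr hi, hG⟩
  have e2 : ({a} ∪ {b} ∪ Z) ∩ G2 = {b} ∪ (Z ∩ G2) := by
    ext i
    simp only [Finset.mem_inter, Finset.mem_union, Finset.mem_singleton]
    constructor
    · rintro ⟨(rfl | rfl) | hi, hG⟩
      · exact absurd hG haG2
      · exact Or.inl rfl
      · exact Or.inr ⟨hi, hG⟩
    · rintro (rfl | ⟨hi, hG⟩)
      · exact ⟨Or.inl (Or.inr rfl), hb⟩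
      · exact ⟨Or.inr hi, hG⟩
  have e3 : ({a} ∪ Z) ∩ G1 = {a} ∪ (Z ∩ G1) := by
    ext i
    simp only [Finset.mem_inter, Finset.mem_union, Finset.mem_singleton]
    constructor
    · rintro ⟨rfl | hi, hG⟩
      · exact Or.inl rfl
      · exact Or.inr ⟨hi, hG⟩
    · rintro (rfl | ⟨hi, hG⟩)
      · exact ⟨Or.inl rfl, ha⟩
      · exact ⟨Or.inr hi, hG⟩
  have e4 : ({a} ∪ Z) ∩ G2 = Z ∩ G2 := by
    ext i
    simp only [Finset.mem_inter, Finset.mem_union, Finset.mem_singleton]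
    constructor
    · rintro ⟨rfl | hi, hG⟩
      · exact absurd hG haG2
      · exact ⟨hi, hG⟩
    · rintro ⟨hi, hG⟩
      exact ⟨Or.inr hi, hG⟩
  have e5 : ({b} ∪ Z) ∩ G1 = Z ∩ G1 := by
    ext i
    simp only [Finset.mem_inter, Finset.mem_union, Finset.mem_singleton]
    constructor
    · rintro ⟨rfl | hi, hG⟩
      · exact absurd hG hbG1
      · exact ⟨hi, hG⟩
    · rintro ⟨hi, hG⟩
      exact ⟨Or.inr hi, hG⟩
  have e6 : ({b} ∪ Z) ∩ G2 = {b} ∪ (Z ∩ G2) := by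
    ext i
    simp only [Finset.mem_inter, Finset.mem_union, Finset.mem_singleton]
    constructor
    · rintro ⟨rfl | hi, hG⟩
      · exact Or.inl rfl
      · exact Or.inr ⟨hi, hG⟩
    · rintro (rfl | ⟨hi, hG⟩)
      · exact ⟨Or.inl rfl, hb⟩
      · exact ⟨Or.inr hi, hG⟩
  rw [C2 ({a} ∪ {b} ∪ Z) s, C2 Z s, C2 ({a} ∪ Z) s, C2 ({b} ∪ Z) s, e1, e2, e3, e4, e5, e6]
  ring

lemma margin_insert_eq_of_one {x : ι} {s : ∀ i, Ω i}
    (hpos : ∀ ω, 0 ≤ P ω) (hsum : ∑ ω, P ω = 1)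
    (h1 : margin P {x} s = 1) (T : Finset ι) (hxT : x ∉ T) :
    margin P (insert x T) s = margin P T s := by
  have hall : ∑ v : Ω x, margin P {x} (Function.update s x v) = 1 := by
    have := sum_margin_insert (P := P) (a := x) (T := ∅) (Finset.notMem_empty x) s
    rw [margin_empty, hsum] at this
    simpa using this
  have hzero : ∀ v : Ω x, v ≠ s x → margin P {x} (Function.update s x v) = 0 := by
    intro v hv
    have hsx : margin P {x} (Function.update s x (s x)) = 1 := by
      rw [margin_congr (fun i hi => ?_)]
      · exact h1
      · rcases Finset.mem_singleton.mp hi with rfl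
        rw [Function.update_self]
    have hsplit := hall
    rw [← Finset.sum_erase_add _ _ (Finset.mem_univ (s x)), hsx] at hsplit
    have hz : ∑ v ∈ Finset.univ.erase (s x), margin P {x} (Function.update s x v) = 0 := by
      linarith
    have := (Finset.sum_eq_zero_iff_of_nonneg (fun v _ => margin_nonneg hpos _ _)).mp hz v
      (Finset.mem_erase.mpr ⟨hv, Finset.mem_univ v⟩)
    exact this
  have := sum_margin_insert (P := P) (a := x) (T := T) hxT s
  rw [← Finset.sum_erase_add _ _ (Finset.mem_univ (s x))] at this
  have hz2 : ∑ v ∈ Finset.univ.erase (s x), margin P (insert x T) (Function.update s x v) = 0 := by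
    refine Finset.sum_eq_zero fun v hv => ?_
    have hle : margin P (insert x T) (Function.update s x v) ≤
        margin P {x} (Function.update s x v) :=
      margin_mono hpos (by simp) _
    have hge : 0 ≤ margin P (insert x T) (Function.update s x v) := margin_nonneg hpos _ _
    have := hzero v (Finset.mem_erase.mp hv).1
    linarith
  rw [hz2, zero_add] at this
  rw [← this]
  refine margin_congr fun i hi => ?_
  by_cases hia : i = x
  · subst hia; rw [Function.update_self]
  · rw [Function.update_of_ne hia]

lemma irr_of_det {x : ι} (hpos : ∀ ω, 0 ≤ P ω) (hsum : ∑ ω, P ω = 1)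
    (hdet : ∀ s : ∀ i, Ω i, margin P {x} s * margin P {x} s = margin P {x} s)
    (y : ι) (hxy : y ≠ x) : MutuallyIrrelevant P x y := by
  intro Z hZ s
  have hxZ : x ∉ Z := by
    intro hx
    have := hZ hx
    simp at this
  have hyZ : y ∉ Z := by
    intro hy
    have := hZ hy
    simp at this
  have hcase : margin P {x} s = 0 ∨ margin P {x} s = 1 := by
    have := hdet s
    rcases mul_eq_zero.mp (show margin P {x} s * (margin P {x} s - 1) = 0 by ring_nf; linarith) with h | h
    · exact Or.inl h
    · right; linarith
  have hxyZ : ({x} : Finset ι) ∪ {y} ∪ Z = insert x ({y} ∪ Z) := by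
    ext i; simp [Finset.mem_insert]
  have hxZ' : ({x} : Finset ι) ∪ Z = insert x Z := by
    ext i; simp [Finset.mem_insert]
  rcases hcase with h0 | h1
  · have hA : margin P ({x} ∪ {y} ∪ Z) s = 0 := by
      have hle := margin_mono hpos (show ({x} : Finset ι) ⊆ {x} ∪ {y} ∪ Z by
        intro i hi; exact Finset.mem_union_left _ (Finset.mem_union_left _ hi)) s
      have hge := margin_nonneg hpos ({x} ∪ {y} ∪ Z) s
      linarith
    have hB : margin P ({x} ∪ Z) s = 0 := by
      have hle := margin_mono hpos (show ({x} : Finset ι) ⊆ {x} ∪ Z by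
        intro i hi; exact Finset.mem_union_left _ hi) s
      have hge := margin_nonneg hpos ({x} ∪ Z) s
      linarith
    rw [hA, hB]; ring
  · have hyZx : x ∉ ({y} : Finset ι) ∪ Z := by
      simp only [Finset.mem_union, Finset.mem_singleton]
      rintro (rfl | h)
      · exact hxy rfl
      · exact hxZ h
    rw [hxyZ, hxZ', margin_insert_eq_of_one hpos hsum h1 _ hyZx,
      margin_insert_eq_of_one hpos hsum h1 _ hxZ]
    ring

lemma irr_of_subsingleton {x y : ι} (hsub : ∀ v w : Ω y, v = w) (hxy : x ≠ y) :
    MutuallyIrrelevant P x y := by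
  intro Z hZ s
  have hyZ : y ∉ Z := by
    intro hy
    have := hZ hy
    simp at this
  have e1 : ({x} : Finset ι) ∪ {y} ∪ Z = insert y ({x} ∪ Z) := by
    ext i; simp [Finset.mem_insert]; tauto
  have e2 : ({y} : Finset ι) ∪ Z = insert y Z := by
    ext i; simp [Finset.mem_insert]
  rw [e1, e2, margin_insert_of_forced hsub, margin_insert_of_forced hsub]

lemma bip_union {R U : Finset ι} {e : ι} (hRU : R ⊆ U) :
    R ∪ ({e} ∪ (U \ R)) = insert e U := by
  ext i
  simp only [Finset.mem_union, Finset.mem_insert, Finset.mem_sdiff, Finset.mem_singleton]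
  constructor
  · rintro (h | h | ⟨h, _⟩)
    · exact Or.inr (hRU h)
    · exact Or.inl h
    · exact Or.inr h
  · rintro (rfl | h)
    · exact Or.inr (Or.inl rfl)
    · by_cases hR : i ∈ R
      · exact Or.inl hR
      · exact Or.inr (Or.inr ⟨h, hR⟩)

lemma bip_disj {R U : Finset ι} {e : ι} (hRU : R ⊆ U) (heU : e ∉ U) :
    Disjoint R ({e} ∪ (U \ R)) := by
  rw [Finset.disjoint_left]
  intro i hi
  simp only [Finset.mem_union, Finset.mem_sdiff, Finset.mem_singleton]
  rintro (rfl | ⟨_, h⟩)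
  · exact heU (hRU hi)
  · exact h hi

def GoodL (P : (∀ i, Ω i) → ℝ) (x y z : ι) (U D : Finset ι) (d : ∀ i, Ω i) : Prop :=
  ∃ G1 G2 : Finset ι, G1 ∪ G2 = U ∧ Disjoint G1 G2 ∧ x ∈ G1 ∧ y ∈ G2 ∧ z ∈ G2 ∧
    CondIndepCond P G1 G2 ∅ D d

def GoodR (P : (∀ i, Ω i) → ℝ) (x y z : ι) (U D : Finset ι) (d : ∀ i, Ω i) : Prop :=
  ∃ G1 G2 : Finset ι, G1 ∪ G2 = U ∧ Disjoint G1 G2 ∧ z ∈ G1 ∧ x ∈ G2 ∧ y ∈ G2 ∧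
    CondIndepCond P G1 G2 ∅ D d

lemma blocks_of_good {x y z : ι} {U D : Finset ι} {d : ∀ i, Ω i}
    (w : GoodL P x y z U D d ∨ GoodR P x y z U D d) :
    ∃ B1 B2 : Finset ι, B1 ∪ B2 = U ∧ Disjoint B1 B2 ∧ x ∈ B1 ∧ z ∈ B2 ∧ z ∉ B1 ∧ x ∉ B2 ∧
      CondIndepCond P B1 B2 ∅ D d := by
  rcases w with ⟨G1, G2, hu, hd, hx, hy, hz, hI⟩ | ⟨G1, G2, hu, hd, hz, hx, hy, hI⟩
  · exact ⟨G1, G2, hu, hd, hx, hz, Finset.disjoint_right.mp hd hz,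
      Finset.disjoint_left.mp hd hx, hI⟩
  · exact ⟨G2, G1, by rw [Finset.union_comm]; exact hu, hd.symm, hx, hz,
      Finset.disjoint_left.mp hd hz, Finset.disjoint_right.mp hd hx, condIndepCond_symm hI⟩

lemma good_of_concl {x y z e : ι} {R U D : Finset ι} {d : ∀ i, Ω i}
    (hRU : R ⊆ U) (heU : e ∉ U) (hyU : y = e ∨ y ∈ U) (hzU : z ∈ U)
    (hx : x ∈ R) (hz : z ∉ R)
    (hI : CondIndepCond P R ({e} ∪ (U \ R)) ∅ D d) :
    GoodL P x y z (insert e U) D d ∨ GoodR P x y z (insert e U) D d := by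
  have hyG2 : y ∉ R → y ∈ {e} ∪ (U \ R) := by
    intro hyR
    rcases hyU with rfl | hyU
    · exact Finset.mem_union_left _ (Finset.mem_singleton_self _)
    · exact Finset.mem_union_right _ (Finset.mem_sdiff.mpr ⟨hyU, hyR⟩)
  by_cases hy : y ∈ R
  · right
    exact ⟨{e} ∪ (U \ R), R, by rw [Finset.union_comm]; exact bip_union hRU,
      (bip_disj hRU heU).symm,
      Finset.mem_union_right _ (Finset.mem_sdiff.mpr ⟨hzU, hz⟩), hx, hy, condIndepCond_symm hI⟩
  · left
    exact ⟨R, {e} ∪ (U \ R), bip_union hRU, bip_disj hRU heU, hx, hyG2 hy,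
      Finset.mem_union_right _ (Finset.mem_sdiff.mpr ⟨hzU, hz⟩), hI⟩

lemma good_of_concl2 {x y z e : ι} {R U D : Finset ι} {d : ∀ i, Ω i}
    (hRU : R ⊆ U) (heU : e ∉ U) (hyU : y = e ∨ y ∈ U) (hxU : x ∈ U)
    (hz : z ∈ R) (hx : x ∉ R)
    (hI : CondIndepCond P R ({e} ∪ (U \ R)) ∅ D d) :
    GoodL P x y z (insert e U) D d ∨ GoodR P x y z (insert e U) D d := by
  have hyG2 : y ∉ R → y ∈ {e} ∪ (U \ R) := by
    intro hyR
    rcases hyU with rfl | hyU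
    · exact Finset.mem_union_left _ (Finset.mem_singleton_self _)
    · exact Finset.mem_union_right _ (Finset.mem_sdiff.mpr ⟨hyU, hyR⟩)
  by_cases hy : y ∈ R
  · left
    exact ⟨{e} ∪ (U \ R), R, by rw [Finset.union_comm]; exact bip_union hRU,
      (bip_disj hRU heU).symm,
      Finset.mem_union_right _ (Finset.mem_sdiff.mpr ⟨hxU, hx⟩), hy, hz, condIndepCond_symm hI⟩
  · right
    exact ⟨R, {e} ∪ (U \ R), bip_union hRU, bip_disj hRU heU, hz,
      Finset.mem_union_right _ (Finset.mem_sdiff.mpr ⟨hxU, hx⟩), hyG2 hy, hI⟩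

lemma condIndepCond_insert_right {e : ι} (hsub : ∀ v w : Ω e, v = w) {G1 G2 D : Finset ι}
    {d : ∀ i, Ω i} (h : CondIndepCond P G1 G2 ∅ D d) :
    CondIndepCond P G1 (insert e G2) ∅ D d := by
  intro s hs
  have h1 : G1 ∪ insert e G2 ∪ (∅ ∪ D) = insert e (G1 ∪ G2 ∪ (∅ ∪ D)) := by
    ext i; simp [Finset.mem_insert]
  have h2 : insert e G2 ∪ (∅ ∪ D) = insert e (G2 ∪ (∅ ∪ D)) := by
    ext i; simp [Finset.mem_insert]
  rw [h1, h2, margin_insert_of_forced hsub, margin_insert_of_forced hsub]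
  exact h s hs

lemma main_induction {x y z : ι}
    (H : ∀ (S C : Finset ι) (c : ∀ i, Ω i), Disjoint S C →
      ∀ e : ι, e ∈ S →
      ∀ X1 X2 Y1 Y2 Z1 Z2 : Finset ι,
        IsPartitionOf (S \ {e}) X1 X2 →
        IsPartitionOf (S \ {e}) Y1 Y2 →
        IsPartitionOf (S \ {e}) Z1 Z2 →
      ∀ e' e'' : Ω e, e' ≠ e'' →
        CondIndepCond P X1 X2 ∅ C c →
        CondIndepCond P Y1 Y2 ∅ (insert e C) (Function.update c e e') →
        CondIndepCond P Z1 Z2 ∅ (insert e C) (Function.update c e e'') →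
        CondIndepCond P (X1 ∩ Y1 ∩ Z1)
            ({e} ∪ ((S \ {e}) \ (X1 ∩ Y1 ∩ Z1))) ∅ C c ∨
          CondIndepCond P (X2 ∩ Y2 ∩ Z2)
            ({e} ∪ ((S \ {e}) \ (X2 ∩ Y2 ∩ Z2))) ∅ C c)
    (hxz : MutuallyIrrelevant P x z)
    (hxy : x ≠ y) (hyz : y ≠ z) (hxz' : x ≠ z)
    (e' e'' : Ω y) (hne : e' ≠ e'') :
    ∀ A : Finset ι, A ⊆ Finset.univ \ {x, y, z} →
      ∀ D : Finset ι, D ⊆ (Finset.univ \ {x, y, z}) \ A → ∀ d : ∀ i, Ω i,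
        GoodL P x y z ({x, y, z} ∪ A) D d ∨ GoodR P x y z ({x, y, z} ∪ A) D d := by
  intro A
  induction A using Finset.induction_on with
  | empty =>
    intro _ D hD d
    have hDF : ∀ i ∈ D, i ∉ ({x, y, z} : Finset ι) := by
      intro i hi
      exact (Finset.mem_sdiff.mp ((Finset.mem_sdiff.mp (hD hi)).1)).2
    have hdisj : Disjoint ({x, y, z} : Finset ι) D := by
      rw [Finset.disjoint_right]
      intro i hi
      exact hDF i hi
    have heS : y ∈ ({x, y, z} : Finset ι) := by simp
    have hpart : IsPartitionOf (({x, y, z} : Finset ι) \ {y}) {x} {z} := by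
      refine ⟨?_, Finset.disjoint_singleton_left.mpr (by simp [hxz']),
        Finset.singleton_nonempty x, Finset.singleton_nonempty z⟩
      ext i
      simp only [Finset.mem_union, Finset.mem_singleton, Finset.mem_sdiff, Finset.mem_insert]
      constructor
      · rintro (rfl | rfl)
        · exact ⟨Or.inl rfl, hxy⟩
        · exact ⟨Or.inr (Or.inr rfl), fun h => hyz h.symm⟩
      · rintro ⟨rfl | rfl | rfl, hne2⟩
        · exact Or.inl rfl
        · exact absurd rfl hne2
        · exact Or.inr rfl
    have hDxz : D ⊆ Finset.univ \ ({x, z} : Finset ι) := by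
      intro i hi
      have h2 := hDF i hi
      simp only [Finset.mem_insert, Finset.mem_singleton, not_or] at h2
      simp only [Finset.mem_sdiff, Finset.mem_univ, true_and, Finset.mem_insert,
        Finset.mem_singleton]
      tauto
    have hDyxz : insert y D ⊆ Finset.univ \ ({x, z} : Finset ι) := by
      intro i hi
      rcases Finset.mem_insert.mp hi with rfl | hi
      · simp only [Finset.mem_sdiff, Finset.mem_univ, true_and, Finset.mem_insert,
          Finset.mem_singleton]
        push_neg
        exact ⟨fun h => hxy h.symm, hyz⟩
      · exact hDxz hi
    have h1 := condIndepCond_of_condIndep (hxz D hDxz) d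
    have h2 := condIndepCond_of_condIndep (hxz (insert y D) hDyxz) (Function.update d y e')
    have h3 := condIndepCond_of_condIndep (hxz (insert y D) hDyxz) (Function.update d y e'')
    have hconc := H {x, y, z} D d hdisj y heS {x} {z} {x} {z} {x} {z} hpart hpart hpart
      e' e'' hne h1 h2 h3
    rw [show ({x} : Finset ι) ∩ {x} ∩ {x} = {x} by simp,
      show ({z} : Finset ι) ∩ {z} ∩ {z} = {z} by simp] at hconc
    have hins : insert y (({x, y, z} : Finset ι) \ {y}) = {x, y, z} ∪ ∅ := by
      ext i
      simp only [Finset.mem_insert, Finset.mem_sdiff, Finset.mem_singleton, Finset.union_empty]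
      constructor
      · rintro (rfl | ⟨hi, _⟩)
        · exact Or.inr (Or.inl rfl)
        · exact hi
      · intro hi
        by_cases hiy : i = y
        · exact Or.inl hiy
        · exact Or.inr ⟨hi, hiy⟩
    rw [← hins]
    have hxU0 : x ∈ ({x, y, z} : Finset ι) \ {y} := by
      simp [hxy]
    have hzU0 : z ∈ ({x, y, z} : Finset ι) \ {y} := by
      simp [Ne.symm hyz]
    have hyU0 : y ∉ ({x, y, z} : Finset ι) \ {y} := by simp
    rcases hconc with hc | hc
    · exact good_of_concl (Finset.singleton_subset_iff.mpr hxU0) hyU0 (Or.inl rfl) hzU0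
        (Finset.mem_singleton_self x) (by simpa using Ne.symm hxz') hc
    · exact good_of_concl2 (Finset.singleton_subset_iff.mpr hzU0) hyU0 (Or.inl rfl) hxU0
        (Finset.mem_singleton_self z) (by simpa using hxz') hc
  | @insert e A he ih =>
    intro hsub D hD d
    have hA : A ⊆ Finset.univ \ {x, y, z} := fun i hi => hsub (Finset.mem_insert_of_mem hi)
    have heF : e ∈ Finset.univ \ ({x, y, z} : Finset ι) := hsub (Finset.mem_insert_self e A)
    have heXYZ : e ∉ ({x, y, z} : Finset ι) := (Finset.mem_sdiff.mp heF).2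
    have heU : e ∉ ({x, y, z} : Finset ι) ∪ A := by
      simp only [Finset.mem_union]
      rintro (h | h)
      · exact heXYZ h
      · exact he h
    have hxU : x ∈ ({x, y, z} : Finset ι) ∪ A := Finset.mem_union_left _ (by simp)
    have hyU : y ∈ ({x, y, z} : Finset ι) ∪ A := Finset.mem_union_left _ (by simp)
    have hzU : z ∈ ({x, y, z} : Finset ι) ∪ A := Finset.mem_union_left _ (by simp)
    have hUU' : insert e (({x, y, z} : Finset ι) ∪ A) = {x, y, z} ∪ insert e A := by
      ext i
      simp only [Finset.mem_insert, Finset.mem_union]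
      tauto
    have hDA : D ⊆ (Finset.univ \ {x, y, z}) \ A := by
      intro i hi
      have h2 := Finset.mem_sdiff.mp (hD hi)
      exact Finset.mem_sdiff.mpr ⟨h2.1, fun hiA => h2.2 (Finset.mem_insert_of_mem hiA)⟩
    have heD : e ∉ D := fun hiD => (Finset.mem_sdiff.mp (hD hiD)).2 (Finset.mem_insert_self e A)
    rw [← hUU']
    by_cases hsing : ∀ v w : Ω e, v = w
    · rcases ih hA D hDA d with ⟨G1, G2, hu, hd, hx1, hy2, hz2, hI⟩ |
        ⟨G1, G2, hu, hd, hz1, hx2, hy2, hI⟩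
      · left
        refine ⟨G1, insert e G2, ?_, ?_, hx1, Finset.mem_insert_of_mem hy2,
          Finset.mem_insert_of_mem hz2, condIndepCond_insert_right hsing hI⟩
        · rw [Finset.union_insert, hu]
        · rw [Finset.disjoint_left]
          intro i hi
          rw [Finset.mem_insert]
          rintro (rfl | h)
          · exact heU (hu ▸ Finset.mem_union_left _ hi)
          · exact Finset.disjoint_left.mp hd hi h
      · right
        refine ⟨G1, insert e G2, ?_, ?_, hz1, Finset.mem_insert_of_mem hx2,
          Finset.mem_insert_of_mem hy2, condIndepCond_insert_right hsing hI⟩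
        · rw [Finset.union_insert, hu]
        · rw [Finset.disjoint_left]
          intro i hi
          rw [Finset.mem_insert]
          rintro (rfl | h)
          · exact heU (hu ▸ Finset.mem_union_left _ hi)
          · exact Finset.disjoint_left.mp hd hi h
    · push_neg at hsing
      obtain ⟨v1, v2, hv⟩ := hsing
      have hDe' : insert e D ⊆ (Finset.univ \ {x, y, z}) \ A := by
        intro i hi
        rcases Finset.mem_insert.mp hi with rfl | hi
        · exact Finset.mem_sdiff.mpr ⟨heF, he⟩
        · exact hDA hi
      obtain ⟨B01, B02, hu0, hd0, hx0, hz0, hz0', hx0', hI0⟩ :=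
        blocks_of_good (ih hA D hDA d)
      obtain ⟨B11, B12, hu1, hd1, hx1, hz1, hz1', hx1', hI1⟩ :=
        blocks_of_good (ih hA (insert e D) hDe' (Function.update d e v1))
      obtain ⟨B21, B22, hu2, hd2, hx2, hz2, hz2', hx2', hI2⟩ :=
        blocks_of_good (ih hA (insert e D) hDe' (Function.update d e v2))
      have hdisjS : Disjoint (insert e (({x, y, z} : Finset ι) ∪ A)) D := by
        rw [Finset.disjoint_left]
        intro i hi hiD
        rcases Finset.mem_insert.mp hi with rfl | hi
        · exact heD hiD
        · rcases Finset.mem_union.mp hi with h | h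
          · exact (Finset.mem_sdiff.mp ((Finset.mem_sdiff.mp (hD hiD)).1)).2 h
          · exact (Finset.mem_sdiff.mp (hD hiD)).2 (Finset.mem_insert_of_mem h)
      have hSe : insert e (({x, y, z} : Finset ι) ∪ A) \ {e} = {x, y, z} ∪ A := by
        ext i
        simp only [Finset.mem_sdiff, Finset.mem_insert, Finset.mem_singleton]
        constructor
        · rintro ⟨rfl | hi, hne2⟩
          · exact absurd rfl hne2
          · exact hi
        · intro hi
          exact ⟨Or.inr hi, fun h => heU (h ▸ hi)⟩
      have hpart : ∀ {B1 B2 : Finset ι}, B1 ∪ B2 = {x, y, z} ∪ A → Disjoint B1 B2 →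
          x ∈ B1 → z ∈ B2 →
          IsPartitionOf (insert e (({x, y, z} : Finset ι) ∪ A) \ {e}) B1 B2 := by
        intro B1 B2 hu hd hx hz
        exact ⟨by rw [hSe]; exact hu, hd, ⟨x, hx⟩, ⟨z, hz⟩⟩
      have hconc := H (insert e (({x, y, z} : Finset ι) ∪ A)) D d hdisjS e
        (Finset.mem_insert_self e _) B01 B02 B11 B12 B21 B22
        (hpart hu0 hd0 hx0 hz0) (hpart hu1 hd1 hx1 hz1) (hpart hu2 hd2 hx2 hz2)
        v1 v2 hv hI0 hI1 hI2
      rw [hSe] at hconc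
      rcases hconc with hc | hc
      · refine good_of_concl ?_ heU (Or.inr hyU) hzU ?_ ?_ hc
        · intro i hi
          have h1 : i ∈ B01 := (Finset.mem_inter.mp (Finset.mem_inter.mp hi).1).1
          exact hu0 ▸ Finset.mem_union_left _ h1
        · exact Finset.mem_inter.mpr ⟨Finset.mem_inter.mpr ⟨hx0, hx1⟩, hx2⟩
        · intro hzR
          exact hz0' (Finset.mem_inter.mp (Finset.mem_inter.mp hzR).1).1
      · refine good_of_concl2 ?_ heU (Or.inr hyU) hxU ?_ ?_ hc
        · intro i hi
          have h1 : i ∈ B02 := (Finset.mem_inter.mp (Finset.mem_inter.mp hi).1).1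
          exact hu0 ▸ Finset.mem_union_right _ h1
        · exact Finset.mem_inter.mpr ⟨Finset.mem_inter.mpr ⟨hz0, hz1⟩, hz2⟩
        · intro hxR
          exact hx0' (Finset.mem_inter.mp (Finset.mem_inter.mp hxR).1).1

/-- Suppose `P`, together with every distribution obtained from `P` by
marginalizing out some variables and conditioning on specific values of
others, satisfies the property of Equation (\ref{clean}): such a derived
distribution is specified by its set `S` of remaining variables and the set
`C` of conditioned variables with their values `c` (the variables outside
`S ∪ C` being marginalized out, which does not affect the marginals below);
for a designated variable `e ∈ S` and any three partitions `{X1, X2}`,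
`{Y1, Y2}`, `{Z1, Z2}` of the remaining variables `S \ {e}`, if
`I(X1, X2 | ∅)`, `I(Y1, Y2 | e = e')` and `I(Z1, Z2 | e = e'')` hold (for the
distinct values `e'`, `e''` of `e`), then with `R1 = X1 ∩ Y1 ∩ Z1` and
`R2 = X2 ∩ Y2 ∩ Z2`, either `I(R1, {e} ∪ ((S \ {e}) \ R1) | ∅)` or
`I(R2, {e} ∪ ((S \ {e}) \ R2) | ∅)` holds.  Then `P` is transitive. -/
theorem transitive_of_clean_property
    (P : (∀ i, Ω i) → ℝ) (hpos : ∀ ω, 0 ≤ P ω) (hsum : ∑ ω, P ω = 1)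
    (H : ∀ (S C : Finset ι) (c : ∀ i, Ω i), Disjoint S C →
      ∀ e : ι, e ∈ S →
      ∀ X1 X2 Y1 Y2 Z1 Z2 : Finset ι,
        IsPartitionOf (S \ {e}) X1 X2 →
        IsPartitionOf (S \ {e}) Y1 Y2 →
        IsPartitionOf (S \ {e}) Z1 Z2 →
      ∀ e' e'' : Ω e, e' ≠ e'' →
        CondIndepCond P X1 X2 ∅ C c →
        CondIndepCond P Y1 Y2 ∅ (insert e C) (Function.update c e e') →
        CondIndepCond P Z1 Z2 ∅ (insert e C) (Function.update c e e'') →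
        CondIndepCond P (X1 ∩ Y1 ∩ Z1)
            ({e} ∪ ((S \ {e}) \ (X1 ∩ Y1 ∩ Z1))) ∅ C c ∨
          CondIndepCond P (X2 ∩ Y2 ∩ Z2)
            ({e} ∪ ((S \ {e}) \ (X2 ∩ Y2 ∩ Z2))) ∅ C c) :
    ∀ x y z : ι, Relevant P x y → Relevant P y z → Relevant P x z := by
  intro x y z hxy hyz
  rcases eq_or_ne x y with rfl | hnexy
  · exact hyz
  rcases eq_or_ne y z with rfl | hneyz
  · exact hxy
  rcases eq_or_ne x z with rfl | hnexz
  · intro hirr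
    apply hxy
    have hdet : ∀ s : ∀ i, Ω i, margin P {x} s * margin P {x} s = margin P {x} s := by
      intro s
      have h0 := hirr ∅ (Finset.empty_subset _) s
      simp only [Finset.union_self, Finset.union_empty, margin_empty, hsum, mul_one] at h0
      exact h0.symm
    exact irr_of_det hpos hsum hdet y (Ne.symm hnexy)
  intro hirrxz
  by_cases hsing : ∀ v w : Ω y, v = w
  · exact hxy (irr_of_subsingleton hsing hnexy)
  push_neg at hsing
  obtain ⟨e', e'', hne⟩ := hsing
  have hnonempty : Nonempty (∀ i, Ω i) := by
    by_contra hnon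
    rw [not_nonempty_iff] at hnon
    rw [Finset.univ_eq_empty, Finset.sum_empty] at hsum
    exact one_ne_zero hsum.symm
  obtain ⟨d⟩ := hnonempty
  have hmain := main_induction H hirrxz hnexy hneyz hnexz e' e'' hne
    (Finset.univ \ {x, y, z}) (subset_refl _) ∅ (Finset.empty_subset _) d
  have hUuniv : ({x, y, z} : Finset ι) ∪ (Finset.univ \ {x, y, z}) = Finset.univ :=
    Finset.union_sdiff_of_subset (Finset.subset_univ _)
  rw [hUuniv] at hmain
  rcases hmain with ⟨G1, G2, hu, hd, hxG, hyG, hzG, hI⟩ | ⟨G1, G2, hu, hd, hzG, hxG, hyG, hI⟩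
  · have hfac : ∀ s, P s = margin P G1 s * margin P G2 s := by
      intro s
      have h0 := hI s (fun i hi => absurd hi (Finset.notMem_empty i))
      simp only [Finset.union_empty] at h0
      rw [hu, margin_univ, margin_empty, hsum, mul_one] at h0
      exact h0
    exact hxy (mutuallyIrrelevant_of_factor hfac hd hu hxG hyG)
  · have hfac : ∀ s, P s = margin P G1 s * margin P G2 s := by
      intro s
      have h0 := hI s (fun i hi => absurd hi (Finset.notMem_empty i))
      simp only [Finset.union_empty] at h0
      rw [hu, margin_univ, margin_empty, hsum, mul_one] at h0
      exact h0
    exact hyz (mutuallyIrrelevant_symm (mutuallyIrrelevant_of_factor hfac hd hu hzG hyG))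
end

section
/- Let M be a graphoid over a finite set U ∪ {e} (e ∉ U) that additionally satisfies composition — (X,Y|Z)∈M and (X,W|Z)∈M imply (X,Y∪W|Z)∈M for all pairwise disjoint X,Y,W,Z — and weak transitivity with respect to e — (X,Y|∅)∈M and (X,Y|{e})∈M imply (X,{e}|∅)∈M or ({e},Y|∅)∈M for all disjoint X,Y ⊆ U. Let A1, A2, A3, A4, B1, B2, B3, B4 be pairwise disjoint subsets whose union is U. If (A1∪A2∪A3∪A4, B1∪B2∪B3∪B4 | ∅) ∈ M, (A1∪A2∪B3∪B4, B1∪B2∪A3∪A4 | {e}) ∈ M, and (A1∪A3∪B2∪B4, B1∪B3∪A2∪A4 | {e}) ∈ M, then either (A1, {e}∪A2∪A3∪A4∪B1∪B2∪B3∪B4 | ∅) ∈ M or (B1, {e}∪A1∪A2∪A3∪A4∪B2∪B3∪B4 | ∅) ∈ M. -/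
private lemma Graphoid.relc {V : Type*} [DecidableEq V] (M : Graphoid V)
    {X Y Z Y' Z' : Finset V} (h : M.rel X Y Z) (hY : Y = Y') (hZ : Z = Z') :
    M.rel X Y' Z' := hY ▸ hZ ▸ h

/-- The key derivation: assuming additionally `A1 ⟂ {e} | ∅`, we conclude that
`A1` is independent of everything else. -/
private lemma graphoid_derive {V : Type*} [DecidableEq V] (M : Graphoid V) (e : V)
    (hcomp : ∀ X Y W Z : Finset V, Disjoint X Y → Disjoint X W → Disjoint X Z →
      Disjoint Y W → Disjoint Y Z → Disjoint W Z →
      M.rel X Y Z → M.rel X W Z → M.rel X (Y ∪ W) Z)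
    (A1 A2 A3 A4 B1 B2 B3 B4 : Finset V)
    (hd : List.Pairwise Disjoint [{e}, A1, A2, A3, A4, B1, B2, B3, B4])
    (I1 : M.rel (A1 ∪ A2 ∪ A3 ∪ A4) (B1 ∪ B2 ∪ B3 ∪ B4) ∅)
    (I2 : M.rel (A1 ∪ A2 ∪ B3 ∪ B4) (B1 ∪ B2 ∪ A3 ∪ A4) {e})
    (I3 : M.rel (A1 ∪ A3 ∪ B2 ∪ B4) (B1 ∪ B3 ∪ A2 ∪ A4) {e})
    (hAe : M.rel A1 {e} ∅) :
    M.rel A1 ({e} ∪ A2 ∪ A3 ∪ A4 ∪ B1 ∪ B2 ∪ B3 ∪ B4) ∅ := by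
  simp only [List.pairwise_cons, List.forall_mem_cons, List.forall_mem_nil,
    List.Pairwise.nil, and_true] at hd
  obtain ⟨⟨e1, e2, e3, e4, e5, e6, e7, e8, -⟩, ⟨d12, d13, d14, d15, d16, d17, d18, -⟩,
    ⟨d23, d24, d25, d26, d27, d28, -⟩, ⟨d34, d35, d36, d37, d38, -⟩,
    ⟨d45, d46, d47, d48, -⟩, ⟨d56, d57, d58, -⟩, ⟨d67, d68, -⟩, ⟨⟨d78, -⟩, -⟩⟩ := hd
  -- compound disjointness facts needed for the composition step
  have dAB : Disjoint A1 (B1 ∪ B2 ∪ B3 ∪ B4) := by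
    simp only [Finset.disjoint_union_left, Finset.disjoint_union_right]
    and_intros <;> first | assumption | (apply Disjoint.symm ; assumption)
  have dAe : Disjoint A1 {e} := e1.symm
  have dAZ : Disjoint A1 (A2 ∪ A3 ∪ A4) := by
    simp only [Finset.disjoint_union_left, Finset.disjoint_union_right]
    and_intros <;> first | assumption | (apply Disjoint.symm ; assumption)
  have dBe : Disjoint (B1 ∪ B2 ∪ B3 ∪ B4) {e} := by
    simp only [Finset.disjoint_union_left, Finset.disjoint_union_right]
    and_intros <;> first | assumption | (apply Disjoint.symm ; assumption)
  have dBZ : Disjoint (B1 ∪ B2 ∪ B3 ∪ B4) (A2 ∪ A3 ∪ A4) := by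
    simp only [Finset.disjoint_union_left, Finset.disjoint_union_right]
    and_intros <;> first | assumption | (apply Disjoint.symm ; assumption)
  have deZ : Disjoint ({e} : Finset V) (A2 ∪ A3 ∪ A4) := by
    simp only [Finset.disjoint_union_left, Finset.disjoint_union_right]
    and_intros <;> first | assumption | (apply Disjoint.symm ; assumption)
  -- Step 1: A1 ⟂ A3 ∪ A4 | {e}  (from I2)
  have s1 : M.rel (B1 ∪ B2 ∪ A3 ∪ A4) (A1 ∪ (A2 ∪ B3 ∪ B4)) {e} :=
    M.relc (M.symm _ _ _ I2) (by ac_rfl) rfl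
  have s2 : M.rel A1 ((A3 ∪ A4) ∪ (B1 ∪ B2)) {e} :=
    M.relc (M.symm _ _ _ (M.decomposition _ _ _ _ s1)) (by ac_rfl) rfl
  have s3 : M.rel A1 (A3 ∪ A4) {e} := M.decomposition _ _ _ _ s2
  -- Step 2: A1 ⟂ A2 | {e} ∪ A3 ∪ A4  (from I3)
  have t1 : M.rel (B1 ∪ B3 ∪ A2 ∪ A4) ((A1 ∪ A3) ∪ (B2 ∪ B4)) {e} :=
    M.relc (M.symm _ _ _ I3) (by ac_rfl) rfl
  have t2 : M.rel (A1 ∪ A3) ((A2 ∪ A4) ∪ (B1 ∪ B3)) {e} :=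
    M.relc (M.symm _ _ _ (M.decomposition _ _ _ _ t1)) (by ac_rfl) rfl
  have t4 : M.rel (A1 ∪ A3) (A2 ∪ A4) {e} := M.decomposition _ _ _ _ t2
  have t5 : M.rel (A1 ∪ A3) A2 ({e} ∪ A4) := M.weakUnion _ _ _ _ t4
  have t6 : M.rel A2 A1 ({e} ∪ A4 ∪ A3) := M.weakUnion _ _ _ _ (M.symm _ _ _ t5)
  have t8 : M.rel A1 A2 ({e} ∪ (A3 ∪ A4)) := M.relc (M.symm _ _ _ t6) rfl (by ac_rfl)
  -- Step 3: A1 ⟂ A2 ∪ A3 ∪ A4 | {e}  (contraction)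
  have s4 : M.rel A1 ((A3 ∪ A4) ∪ A2) {e} := M.contraction _ _ _ _ s3 t8
  -- Step 4: A1 ⟂ {e} ∪ A2 ∪ A3 ∪ A4 | ∅  (contraction with the case hypothesis)
  have s5 : M.rel A1 ({e} ∪ ((A3 ∪ A4) ∪ A2)) ∅ :=
    M.contraction _ _ _ _ hAe (M.relc s4 rfl (Finset.empty_union _).symm)
  -- Step 5: A1 ⟂ {e} | A2 ∪ A3 ∪ A4  (weak union)
  have s6 : M.rel A1 {e} (A2 ∪ A3 ∪ A4) :=
    M.relc (M.weakUnion _ _ _ _ s5) rfl (by rw [Finset.empty_union]; ac_rfl)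
  -- Step 6: A1 ⟂ B1 ∪ B2 ∪ B3 ∪ B4 | A2 ∪ A3 ∪ A4  (from I1)
  have s7 : M.rel (B1 ∪ B2 ∪ B3 ∪ B4) (A1 ∪ (A2 ∪ A3 ∪ A4)) ∅ :=
    M.relc (M.symm _ _ _ I1) (by ac_rfl) rfl
  have s7' : M.rel A1 (B1 ∪ B2 ∪ B3 ∪ B4) (A2 ∪ A3 ∪ A4) :=
    M.relc (M.symm _ _ _ (M.weakUnion _ _ _ _ s7)) rfl (Finset.empty_union _)
  -- Step 7: composition
  have s8 : M.rel A1 ((B1 ∪ B2 ∪ B3 ∪ B4) ∪ {e}) (A2 ∪ A3 ∪ A4) :=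
    hcomp _ _ _ _ dAB dAe dAZ dBe dBZ.symm.symm deZ.symm.symm s7' s6
  -- Step 8: A1 ⟂ A2 ∪ A3 ∪ A4 | ∅  (decomposition of step 4)
  have s9 : M.rel A1 (A2 ∪ A3 ∪ A4) ∅ :=
    M.decomposition _ _ {e} _ (M.relc s5 (by ac_rfl) rfl)
  -- Step 9: final contraction
  have s10 : M.rel A1 ((A2 ∪ A3 ∪ A4) ∪ ((B1 ∪ B2 ∪ B3 ∪ B4) ∪ {e})) ∅ :=
    M.contraction _ _ _ _ s9 (M.relc s8 rfl (Finset.empty_union _).symm)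
  exact M.relc s10 (by ac_rfl) rfl

variable {V : Type*} [Fintype V] [DecidableEq V]

/-- Let `M` be a graphoid over `U ∪ {e}` (here `V` is the whole domain
`U ∪ {e}` and `U = univ \ {e}`) satisfying in addition composition and weak
transitivity with respect to `e`.  If `A1, …, A4, B1, …, B4` are pairwise
disjoint subsets whose union is `U` and the three independencies
`(A1∪A2∪A3∪A4, B1∪B2∪B3∪B4 | ∅)`, `(A1∪A2∪B3∪B4, B1∪B2∪A3∪A4 | {e})` and
`(A1∪A3∪B2∪B4, B1∪B3∪A2∪A4 | {e})` are in `M`, then either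
`(A1, {e}∪A2∪A3∪A4∪B1∪B2∪B3∪B4 | ∅) ∈ M` or
`(B1, {e}∪A1∪A2∪A3∪A4∪B2∪B3∪B4 | ∅) ∈ M`. -/
theorem graphoid_composition_weak_transitivity (M : Graphoid V) (e : V)
    (hcomp : ∀ X Y W Z : Finset V, Disjoint X Y → Disjoint X W → Disjoint X Z →
      Disjoint Y W → Disjoint Y Z → Disjoint W Z →
      M.rel X Y Z → M.rel X W Z → M.rel X (Y ∪ W) Z)
    (hwt : ∀ X Y : Finset V, X ⊆ Finset.univ \ {e} → Y ⊆ Finset.univ \ {e} →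
      Disjoint X Y → M.rel X Y ∅ → M.rel X Y {e} →
      M.rel X {e} ∅ ∨ M.rel {e} Y ∅)
    (A1 A2 A3 A4 B1 B2 B3 B4 : Finset V)
    (hdisj : List.Pairwise Disjoint [A1, A2, A3, A4, B1, B2, B3, B4])
    (hU : A1 ∪ A2 ∪ A3 ∪ A4 ∪ B1 ∪ B2 ∪ B3 ∪ B4 = Finset.univ \ {e})
    (I1 : M.rel (A1 ∪ A2 ∪ A3 ∪ A4) (B1 ∪ B2 ∪ B3 ∪ B4) ∅)
    (I2 : M.rel (A1 ∪ A2 ∪ B3 ∪ B4) (B1 ∪ B2 ∪ A3 ∪ A4) {e})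
    (I3 : M.rel (A1 ∪ A3 ∪ B2 ∪ B4) (B1 ∪ B3 ∪ A2 ∪ A4) {e}) :
    M.rel A1 ({e} ∪ A2 ∪ A3 ∪ A4 ∪ B1 ∪ B2 ∪ B3 ∪ B4) ∅ ∨
      M.rel B1 ({e} ∪ A1 ∪ A2 ∪ A3 ∪ A4 ∪ B2 ∪ B3 ∪ B4) ∅ := by
  -- each block is a subset of univ \ {e}
  have hsub : ∀ X : Finset V,
      X ⊆ A1 ∪ A2 ∪ A3 ∪ A4 ∪ B1 ∪ B2 ∪ B3 ∪ B4 → X ⊆ Finset.univ \ {e} :=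
    fun X h => hU ▸ h
  have hA1s : A1 ⊆ Finset.univ \ {e} := hsub A1 (by intro x hx; simp [Finset.mem_union, hx])
  have hB1s : B1 ⊆ Finset.univ \ {e} := hsub B1 (by intro x hx; simp [Finset.mem_union, hx])
  -- {e} is disjoint from every block
  have hme : ∀ X : Finset V, X ⊆ Finset.univ \ {e} → Disjoint ({e} : Finset V) X := by
    intro X h
    rw [Finset.disjoint_singleton_left]
    intro hx
    simpa using (Finset.mem_sdiff.mp (h hx)).2
  have he1 : Disjoint ({e} : Finset V) A1 := hme A1 hA1s
  have he2 : Disjoint ({e} : Finset V) A2 :=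
    hme A2 (hsub A2 (by intro x hx; simp [Finset.mem_union, hx]))
  have he3 : Disjoint ({e} : Finset V) A3 :=
    hme A3 (hsub A3 (by intro x hx; simp [Finset.mem_union, hx]))
  have he4 : Disjoint ({e} : Finset V) A4 :=
    hme A4 (hsub A4 (by intro x hx; simp [Finset.mem_union, hx]))
  have he5 : Disjoint ({e} : Finset V) B1 := hme B1 hB1s
  have he6 : Disjoint ({e} : Finset V) B2 :=
    hme B2 (hsub B2 (by intro x hx; simp [Finset.mem_union, hx]))
  have he7 : Disjoint ({e} : Finset V) B3 :=
    hme B3 (hsub B3 (by intro x hx; simp [Finset.mem_union, hx]))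
  have he8 : Disjoint ({e} : Finset V) B4 :=
    hme B4 (hsub B4 (by intro x hx; simp [Finset.mem_union, hx]))
  -- pairwise disjointness including {e}
  have hd9 : List.Pairwise Disjoint [{e}, A1, A2, A3, A4, B1, B2, B3, B4] := by
    refine List.pairwise_cons.mpr ⟨?_, hdisj⟩
    intro b hb
    fin_cases hb <;> assumption
  -- A1 ⟂ B1 | ∅  from I1
  have u1 : M.rel (A1 ∪ A2 ∪ A3 ∪ A4) B1 ∅ :=
    M.decomposition _ _ _ _ (M.decomposition _ _ _ _ (M.decomposition _ _ _ _ I1))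
  have u2 : M.rel A1 B1 ∅ :=
    M.symm _ _ _ (M.decomposition _ _ _ _ (M.decomposition _ _ _ _
      (M.decomposition _ _ _ _ (M.symm _ _ _ u1))))
  -- A1 ⟂ B1 | {e}  from I2
  have v1 : M.rel (A1 ∪ A2 ∪ B3 ∪ B4) B1 {e} :=
    M.decomposition _ _ _ _ (M.decomposition _ _ _ _ (M.decomposition _ _ _ _ I2))
  have v2 : M.rel A1 B1 {e} :=
    M.symm _ _ _ (M.decomposition _ _ _ _ (M.decomposition _ _ _ _
      (M.decomposition _ _ _ _ (M.symm _ _ _ v1))))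
  -- disjointness of A1 and B1
  have dA1B1 : Disjoint A1 B1 := by
    have h := List.pairwise_iff_get.mp hdisj ⟨0, by norm_num⟩ ⟨4, by norm_num⟩
      (by exact Fin.mk_lt_mk.mpr (by norm_num))
    exact h
  -- weak transitivity
  rcases hwt A1 B1 hA1s hB1s dA1B1 u2 v2 with h | h
  · -- case A1 ⟂ {e} | ∅
    exact Or.inl (graphoid_derive M e hcomp A1 A2 A3 A4 B1 B2 B3 B4 hd9 I1 I2 I3 h)
  · -- case {e} ⟂ B1 | ∅ : apply the lemma with the roles of A and B exchanged
    have hd9' : List.Pairwise Disjoint [{e}, B1, B2, B3, B4, A1, A2, A3, A4] := by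
      have hperm : List.Perm
          ({e} :: ([A1, A2, A3, A4] ++ [B1, B2, B3, B4]))
          ({e} :: ([B1, B2, B3, B4] ++ [A1, A2, A3, A4])) :=
        List.Perm.cons _ List.perm_append_comm
      exact ((List.Perm.pairwise_iff (fun {x y : Finset V} (h : Disjoint x y) => h.symm) hperm).mp hd9)
    have key := graphoid_derive M e hcomp B1 B2 B3 B4 A1 A2 A3 A4 hd9'
      (M.symm _ _ _ I1) (M.symm _ _ _ I2) (M.symm _ _ _ I3) (M.symm _ _ _ h)
    exact Or.inr (M.relc key (by ac_rfl) rfl)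
end
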